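/- Let A be a 1-generated F-semilattice that is isomorphic to each of its nontrivial 1-generated subalgebras, say A is generated by a. If s and t are unary terms with s(a) ≠ t(a), then for every element b of A that is not the least element, s(b) ≠ t(b). Consequently the quasi-identity (s(x) = t(x)) → (x = x ∧ y) holds in A, and the two-element F-semilattice does not belong to the quasivariety generated by A. -/

import Mathlib

inductive SLTerm (F : Type) : Type where
  | var : SLTerm F
  | meet : SLTerm F → SLTerm F → SLTerm F
  | act : F → SLTerm F → SLTerm F

/-- Evaluation of a unary term at an element of an `F`-semilattice. -/
def SLTerm.eval {F A : Type} [SemilatticeInf A] [SMul F A] : SLTerm F → A → A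
  | .var, a => a
  | .meet s t, a => s.eval a ⊓ t.eval a
  | .act g t, a => g • t.eval a

inductive SLTermN (F : Type) : Type where
  | var : ℕ → SLTermN F
  | meet : SLTermN F → SLTermN F → SLTermN F
  | act : F → SLTermN F → SLTermN F

def SLTermN.eval {F A : Type} [SemilatticeInf A] [SMul F A] : SLTermN F → (ℕ → A) → A
  | .var n, v => v n
  | .meet s t, v => s.eval v ⊓ t.eval v
  | .act g t, v => g • t.eval v

def SatQI (F : Type) (A : Type) [SemilatticeInf A] [SMul F A]
    (prem : List (SLTermN F × SLTermN F)) (c : SLTermN F × SLTermN F) : Prop :=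
  ∀ v : ℕ → A, (∀ p ∈ prem, p.1.eval v = p.2.eval v) → c.1.eval v = c.2.eval v

/-- `B` belongs to the quasivariety generated by `A`. -/
def InQ (F : Type) (A B : Type) [SemilatticeInf A] [SMul F A]
    [SemilatticeInf B] [SMul F B] : Prop :=
  ∀ prem c, SatQI F A prem c → SatQI F B prem c

/-- `B` belongs to the variety generated by `A`. -/
def InV (F : Type) (A B : Type) [SemilatticeInf A] [SMul F A]
    [SemilatticeInf B] [SMul F B] : Prop :=
  ∀ s t : SLTermN F, (∀ v : ℕ → A, s.eval v = t.eval v) → ∀ v : ℕ → B, s.eval v = t.eval v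

def IsHom (F : Type) {A B : Type} [SemilatticeInf A] [SMul F A] [SemilatticeInf B] [SMul F B]
    (φ : A → B) : Prop :=
  (∀ x y : A, φ (x ⊓ y) = φ x ⊓ φ y) ∧ ∀ (g : F) (x : A), φ (g • x) = g • φ x

/-- The subuniverse of `A` generated by `a`. -/
def genSet (F : Type) {A : Type} [SemilatticeInf A] [SMul F A] (a : A) : Set A :=
  Set.range fun t : SLTerm F => t.eval a

/-- The quasivariety generated by `A` is a minimal quasivariety of `F`-semilattices. -/
def MinGen (F : Type) [CommGroup F] (A : Type) [SemilatticeInf A] [MulAction F A] : Prop :=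
  Nontrivial A ∧
    ∀ (B : Type) [SemilatticeInf B] [MulAction F B],
      (∀ (g : F) (x y : B), g • (x ⊓ y) = g • x ⊓ g • y) →
      InQ F A B → Nontrivial B → InQ F B A

/-!
Since `F` is abelian, unary terms commute with each other, and they commute with
homomorphisms. If `b` generates a nontrivial subalgebra, an embedding `φ` of `A` onto it sends
`a` to some `r(b)`, and `s(b) = t(b)` would give `s(φ a) = r(s b) = r(t b) = t(φ a)`, hence
`s(a) = t(a)` by injectivity. If `b` generates a trivial subalgebra, then `b` is fixed by `F`;
being of the form `v(a)` it lies below some translate `g • a`, hence below every translate, hence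
below every element. In the two-element semilattice with trivial action every unary term is the
identity, so the quasi-identity `s(x) = t(x) → x = x ⊓ y` fails there.
-/

def SLTerm.toN {F : Type} : SLTerm F → SLTermN F
  | .var => .var 0
  | .meet s t => .meet s.toN t.toN
  | .act g t => .act g t.toN

theorem monotone_smul_of_smul_inf {F A : Type} [SemilatticeInf A] [SMul F A]
    (hA : ∀ (g : F) (x y : A), g • (x ⊓ y) = g • x ⊓ g • y) (g : F) :
    Monotone fun x : A => g • x := fun x y hxy =>
  calc g • x = g • x ⊓ g • y := by rw [← hA, inf_eq_left.mpr hxy]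
    _ ≤ g • y := inf_le_right

namespace SLTerm

variable {F A : Type} [SemilatticeInf A]

theorem eval_toN [SMul F A] (p : SLTerm F) (v : ℕ → A) : p.toN.eval v = p.eval (v 0) := by
  induction p with
  | var => rfl
  | meet s t hs ht => simp only [toN, SLTermN.eval, eval, hs, ht]
  | act g t ht => simp only [toN, SLTermN.eval, eval, ht]

theorem eval_eq_self_of_smul_eq_self [SMul F A] (h : ∀ (g : F) (x : A), g • x = x)
    (p : SLTerm F) (x : A) : p.eval x = x := by
  induction p with
  | var => rfl
  | meet s t hs ht => simp only [eval, hs, ht, inf_idem]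
  | act g t ht => simp only [eval, ht, h]

theorem eval_inf [SMul F A] (hA : ∀ (g : F) (x y : A), g • (x ⊓ y) = g • x ⊓ g • y)
    (p : SLTerm F) (x y : A) : p.eval (x ⊓ y) = p.eval x ⊓ p.eval y := by
  induction p with
  | var => rfl
  | meet s t hs ht => simp only [eval, hs, ht]; exact inf_inf_inf_comm _ _ _ _
  | act g t ht => simp only [eval, ht, hA]

theorem eval_smul [CommMonoid F] [MulAction F A]
    (hA : ∀ (g : F) (x y : A), g • (x ⊓ y) = g • x ⊓ g • y) (p : SLTerm F) (g : F) (x : A) :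
    p.eval (g • x) = g • p.eval x := by
  induction p with
  | var => rfl
  | meet s t hs ht => simp only [eval, hs, ht, hA]
  | act h t ht => simp only [eval, ht, smul_smul, mul_comm]

theorem eval_eval_comm [CommMonoid F] [MulAction F A]
    (hA : ∀ (g : F) (x y : A), g • (x ⊓ y) = g • x ⊓ g • y) (p q : SLTerm F) (x : A) :
    p.eval (q.eval x) = q.eval (p.eval x) := by
  induction p with
  | var => rfl
  | meet s t hs ht => simp only [eval, hs, ht, eval_inf hA]
  | act g t ht => simp only [eval, ht, eval_smul hA]

theorem exists_eval_le_smul [Monoid F] [MulAction F A]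
    (hA : ∀ (g : F) (x y : A), g • (x ⊓ y) = g • x ⊓ g • y) (p : SLTerm F) (x : A) :
    ∃ g : F, p.eval x ≤ g • x := by
  induction p with
  | var => exact ⟨1, (one_smul F x).ge⟩
  | meet s t hs ht =>
    obtain ⟨g, hg⟩ := hs
    exact ⟨g, inf_le_left.trans hg⟩
  | act g t ht =>
    obtain ⟨h, hh⟩ := ht
    exact ⟨g * h, by simpa only [eval, mul_smul] using monotone_smul_of_smul_inf hA g hh⟩

theorem le_eval_of_forall_le_smul [Monoid F] [MulAction F A]
    (hA : ∀ (g : F) (x y : A), g • (x ⊓ y) = g • x ⊓ g • y) (p : SLTerm F) {x y : A}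
    (h : ∀ g : F, y ≤ g • x) : y ≤ p.eval x := by
  suffices ∀ (p : SLTerm F) (g : F), y ≤ g • p.eval x by simpa using this p 1
  intro p
  induction p with
  | var => exact h
  | meet s t hs ht => exact fun g => by simpa only [eval, hA] using le_inf (hs g) (ht g)
  | act g' t ht => exact fun g => by simpa only [eval, smul_smul] using ht (g * g')

end SLTerm

theorem IsHom.map_eval {F A B : Type} [SemilatticeInf A] [SMul F A] [SemilatticeInf B]
    [SMul F B] {φ : A → B} (hφ : IsHom F φ) (p : SLTerm F) (x : A) :
    φ (p.eval x) = p.eval (φ x) := by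
  induction p with
  | var => rfl
  | meet s t hs ht => simp only [SLTerm.eval, hφ.1, hs, ht]
  | act g t ht => simp only [SLTerm.eval, hφ.2, ht]

section OneGenerated

variable {F A : Type} [SemilatticeInf A]

theorem isBot_of_forall_smul_eq_self [Group F] [MulAction F A]
    (hA : ∀ (g : F) (x y : A), g • (x ⊓ y) = g • x ⊓ g • y) {a : A}
    (hgen : ∀ x : A, ∃ t : SLTerm F, t.eval a = x) {b : A} (hb : ∀ g : F, g • b = b) :
    IsBot b := by
  obtain ⟨v, rfl⟩ := hgen b
  obtain ⟨g, hg⟩ := v.exists_eval_le_smul hA a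
  have hle (k : F) : v.eval a ≤ k • a := by
    simpa only [hb, smul_smul, inv_mul_cancel_right] using
      monotone_smul_of_smul_inf hA (k * g⁻¹) hg
  intro x
  obtain ⟨w, rfl⟩ := hgen x
  exact w.le_eval_of_forall_le_smul hA hle

theorem eval_ne_of_injective_of_mem_genSet [CommMonoid F] [MulAction F A]
    (hA : ∀ (g : F) (x y : A), g • (x ⊓ y) = g • x ⊓ g • y) {φ : A → A} (hφ : IsHom F φ)
    (hinj : Function.Injective φ) {a b : A} (hφa : φ a ∈ genSet F b) {s t : SLTerm F}
    (hst : s.eval a ≠ t.eval a) : s.eval b ≠ t.eval b := by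
  intro hb
  obtain ⟨r, hr⟩ := hφa
  refine hst (hinj ?_)
  rw [hφ.map_eval, hφ.map_eval, ← hr, s.eval_eval_comm hA, t.eval_eval_comm hA, hb]

theorem eval_ne_of_not_isBot [CommGroup F] [MulAction F A]
    (hA : ∀ (g : F) (x y : A), g • (x ⊓ y) = g • x ⊓ g • y)
    {a : A} (hgen : ∀ x : A, ∃ t : SLTerm F, t.eval a = x)
    (hiso : ∀ b : A, (∃ x y : A, x ∈ genSet F b ∧ y ∈ genSet F b ∧ x ≠ y) →
      ∃ φ : A → A, Function.Injective φ ∧ Set.range φ = genSet F b ∧ IsHom F φ)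
    {s t : SLTerm F} (hst : s.eval a ≠ t.eval a) {b : A} (hb : ¬ IsBot b) :
    s.eval b ≠ t.eval b := by
  by_cases hnt : ∃ x y : A, x ∈ genSet F b ∧ y ∈ genSet F b ∧ x ≠ y
  · obtain ⟨φ, hinj, hrange, hφ⟩ := hiso b hnt
    exact eval_ne_of_injective_of_mem_genSet hA hφ hinj (hrange ▸ ⟨a, rfl⟩) hst
  · push Not at hnt
    have hfix (g : F) : g • b = b := hnt _ b ⟨.act g .var, rfl⟩ ⟨.var, rfl⟩
    exact absurd (isBot_of_forall_smul_eq_self hA hgen hfix) hb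

end OneGenerated

theorem satQI_eq_imp_eq_self_inf_iff {F A : Type} [SemilatticeInf A] [SMul F A] (s t : SLTerm F) :
    SatQI F A [(s.toN, t.toN)] (.var 0, .meet (.var 0) (.var 1)) ↔
      ∀ x y : A, s.eval x = t.eval x → x = x ⊓ y := by
  simp only [SatQI, List.mem_singleton, forall_eq, SLTerm.eval_toN, SLTermN.eval]
  exact ⟨fun h x y => h fun n => if n = 0 then x else y, fun h v => h (v 0) (v 1)⟩

theorem exists_ne_self_inf {B : Type} [SemilatticeInf B] [Nontrivial B] :
    ∃ x y : B, x ≠ x ⊓ y := by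
  obtain ⟨x, y, hxy⟩ := exists_pair_ne B
  by_cases hx : x = x ⊓ y
  · exact ⟨y, x, fun hy => hxy (hx.trans (inf_comm x y ▸ hy.symm))⟩
  · exact ⟨x, y, hx⟩

/-- If the `1`-generated `A` is isomorphic to each of its nontrivial `1`-generated
subalgebras and `s(a) ≠ t(a)`, then `s(b) ≠ t(b)` for every non-least `b`; consequently the
quasi-identity `s(x) = t(x) → x = x ⊓ y` holds in `A` and the two-element `F`-semilattice
is not in the quasivariety generated by `A`. -/
theorem stmt_8 (F : Type) [CommGroup F] (A : Type) [SemilatticeInf A] [MulAction F A]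
    (hA : ∀ (g : F) (x y : A), g • (x ⊓ y) = g • x ⊓ g • y)
    (a : A) (hgen : ∀ x : A, ∃ t : SLTerm F, t.eval a = x)
    (hiso : ∀ b : A, (∃ x y : A, x ∈ genSet F b ∧ y ∈ genSet F b ∧ x ≠ y) →
      ∃ φ : A → A, Function.Injective φ ∧ Set.range φ = genSet F b ∧ IsHom F φ)
    (s t : SLTerm F) (hst : s.eval a ≠ t.eval a) :
    (∀ b : A, ¬ IsBot b → s.eval b ≠ t.eval b) ∧
    (∀ x y : A, s.eval x = t.eval x → x = x ⊓ y) ∧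
    (∀ (B : Type) [SemilatticeInf B] [MulAction F B],
      (∃ x y : B, x ≠ y ∧ ∀ z : B, z = x ∨ z = y) →
      (∀ (g : F) (z : B), g • z = z) → ¬ InQ F A B) := by
  have hne (b : A) (hb : ¬ IsBot b) : s.eval b ≠ t.eval b :=
    eval_ne_of_not_isBot hA hgen hiso hst hb
  have hqi (x y : A) (hx : s.eval x = t.eval x) : x = x ⊓ y := by
    by_cases hbot : IsBot x
    · exact (inf_eq_left.mpr (hbot y)).symm
    · exact absurd hx (hne x hbot)
  refine ⟨hne, hqi, fun B _ _ ⟨x, y, hxy, _⟩ htriv hQ => ?_⟩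
  have : Nontrivial B := ⟨⟨x, y, hxy⟩⟩
  have hqiB := (satQI_eq_imp_eq_self_inf_iff s t).mp (hQ _ _ ((satQI_eq_imp_eq_self_inf_iff s t).mpr hqi))
  obtain ⟨u, v, huv⟩ := exists_ne_self_inf (B := B)
  exact huv (hqiB u v (by rw [s.eval_eq_self_of_smul_eq_self htriv,
    t.eval_eq_self_of_smul_eq_self htriv]))
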